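/- For fixed j and p ∈ (0,1), E[Δ_j(n)] = (1−p)Γ(j)Γ(n−p)/(Γ(n)Γ(j−p)) ∼ (1−p)Γ(j)/Γ(j−p) · n^{−p}, and E[Δ_j(n)^2] = E[N_j(n)]/3 + O(n^{−2p}) ∼ (1−p)Γ(j)/(3Γ(j+p)) · n^p as n → ∞. -/

import Mathlib

/-!
Taking expectations in the three conditional identities turns them into first-order linear
recurrences `x (n + 1) = (n + a) / n * x n`: for `E[Δ n]` with `a = -p`, for `E[N n]` with
`a = p`, and, since the pull-out property gives `E[Δ n (Δ (n + 1) - Δ n)] = -(p / n) E[Δ n ²]`,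
for the gap `E[Δ n ²] - E[N n] / 3` with `a = -2p`; the factor `1 / 3` is exactly what makes the
`E[N]` terms cancel. Such a recurrence is solved by `Γ(n + a) / Γ(n)`, and Wendel's limit
`Γ(n + a) / (Γ(n) n ^ a) → 1`, a consequence of Euler's limit formula, gives the asymptotics.
-/

open MeasureTheory ProbabilityTheory Filter Real
open scoped Topology

namespace Real

lemma Gamma_add_nat_eq_mul_prod {s : ℝ} (hs : 0 < s) (n : ℕ) :
    Gamma (s + n) = Gamma s * ∏ k ∈ Finset.range n, (s + k) := by
  induction n with
  | zero => simp
  | succ n ih =>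
    rw [Nat.cast_succ, ← add_assoc, Gamma_add_one (by positivity), ih, Finset.prod_range_succ]
    ring

lemma Gamma_nat_add_div_eq_div_GammaSeq {s : ℝ} (hs : 0 < s) {n : ℕ} (hn : 0 < n) :
    Gamma (n + s) / (Gamma n * (n : ℝ) ^ s) = Gamma s / GammaSeq s n * (n / (n + s)) := by
  have hn' : (0 : ℝ) < n := Nat.cast_pos.mpr hn
  have hΓs := Gamma_pos_of_pos hs
  have hΓn := Gamma_pos_of_pos hn'
  have hΓns := Gamma_pos_of_pos (add_pos hn' hs)
  have hns : (0 : ℝ) < (n : ℝ) ^ s := rpow_pos_of_pos hn' s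
  have hprod : ∏ k ∈ Finset.range (n + 1), (s + k) = Gamma (n + s) * (n + s) / Gamma s := by
    rw [Finset.prod_range_succ, add_comm (n : ℝ), Gamma_add_nat_eq_mul_prod hs]
    field_simp
  have hfac : (n.factorial : ℝ) = n * Gamma n := by
    rw [← Gamma_add_one hn'.ne', ← Gamma_nat_eq_factorial]
  rw [GammaSeq, hfac, hprod]
  field_simp

lemma tendsto_Gamma_nat_add_div_of_pos {s : ℝ} (hs : 0 < s) :
    Tendsto (fun n : ℕ => Gamma (n + s) / (Gamma n * (n : ℝ) ^ s)) atTop (𝓝 1) := by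
  have hlim := ((tendsto_const_nhds (x := Gamma s)).div (GammaSeq_tendsto_Gamma s)
    (Gamma_pos_of_pos hs).ne').mul (tendsto_natCast_div_add_atTop s)
  rw [div_self (Gamma_pos_of_pos hs).ne', one_mul] at hlim
  refine hlim.congr' ?_
  filter_upwards [eventually_gt_atTop 0] with n hn
  exact (Gamma_nat_add_div_eq_div_GammaSeq hs hn).symm

lemma tendsto_Gamma_nat_add_div_of_add_one {a : ℝ}
    (h : Tendsto (fun n : ℕ => Gamma (n + (a + 1)) / (Gamma n * (n : ℝ) ^ (a + 1))) atTop (𝓝 1)) :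
    Tendsto (fun n : ℕ => Gamma (n + a) / (Gamma n * (n : ℝ) ^ a)) atTop (𝓝 1) := by
  have hlim := h.mul (tendsto_natCast_div_add_atTop a)
  rw [one_mul] at hlim
  refine hlim.congr' ?_
  filter_upwards [eventually_gt_atTop 0,
    tendsto_natCast_atTop_atTop.eventually_gt_atTop (-a)] with n hn hna
  have hn' : (0 : ℝ) < n := Nat.cast_pos.mpr hn
  have hna' : (0 : ℝ) < n + a := by linarith
  have hΓn := Gamma_pos_of_pos hn'
  have hna : (0 : ℝ) < (n : ℝ) ^ a := rpow_pos_of_pos hn' a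
  rw [← add_assoc, Gamma_add_one hna'.ne', rpow_add_one hn'.ne']
  field_simp

theorem tendsto_Gamma_nat_add_div (a : ℝ) :
    Tendsto (fun n : ℕ => Gamma (n + a) / (Gamma n * (n : ℝ) ^ a)) atTop (𝓝 1) := by
  obtain ⟨k, hk⟩ := exists_nat_gt (-a)
  induction k generalizing a with
  | zero => exact tendsto_Gamma_nat_add_div_of_pos (by simpa using hk)
  | succ k ih =>
    exact tendsto_Gamma_nat_add_div_of_add_one (ih (a + 1) (by push_cast at hk; linarith))

end Real

section Recurrence

variable {a : ℝ} {m : ℕ} {x : ℕ → ℝ}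

lemma eq_Gamma_div_of_recurrence (hm : 0 < m) (hma : 0 < m + a)
    (hx : ∀ n, m ≤ n → x (n + 1) = (n + a) / n * x n) :
    ∀ n, m ≤ n → x n = x m * Gamma m / Gamma (m + a) * (Gamma (n + a) / Gamma n) := by
  have hΓm := Gamma_pos_of_pos (Nat.cast_pos.mpr hm)
  have hΓma := Gamma_pos_of_pos hma
  refine Nat.le_induction (by field_simp) fun n hmn ih => ?_
  have hn : (0 : ℝ) < n := Nat.cast_pos.mpr (hm.trans_le hmn)
  have hna : (0 : ℝ) < n + a := hma.trans_le (by gcongr)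
  have := Gamma_pos_of_pos hn
  rw [hx n hmn, ih, Nat.cast_succ, add_right_comm, Gamma_add_one hna.ne', Gamma_add_one hn.ne']
  field_simp

lemma tendsto_mul_rpow_neg_of_recurrence (hm : 0 < m) (hma : 0 < m + a)
    (hx : ∀ n, m ≤ n → x (n + 1) = (n + a) / n * x n) :
    Tendsto (fun n : ℕ => x n * (n : ℝ) ^ (-a)) atTop
      (𝓝 (x m * Gamma m / Gamma (m + a))) := by
  have hlim := (tendsto_Gamma_nat_add_div a).const_mul (x m * Gamma m / Gamma (m + a))
  rw [mul_one] at hlim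
  refine hlim.congr' ?_
  filter_upwards [eventually_ge_atTop m] with n hmn
  rw [eq_Gamma_div_of_recurrence hm hma hx n hmn, rpow_neg (Nat.cast_nonneg n)]
  ring

end Recurrence

lemma exists_abs_le_mul_rpow_neg_of_tendsto {x : ℕ → ℝ} {r L : ℝ}
    (h : Tendsto (fun n : ℕ => x n * (n : ℝ) ^ r) atTop (𝓝 L)) :
    ∃ C, ∀ n, 0 < n → |x n| ≤ C * (n : ℝ) ^ (-r) := by
  obtain ⟨C, hC⟩ := h.abs.bddAbove_range
  refine ⟨C, fun n hn => ?_⟩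
  have hn' : (0 : ℝ) < n := Nat.cast_pos.mpr hn
  have hbound : |x n| * (n : ℝ) ^ r ≤ C := by
    simpa [abs_mul, abs_of_pos (rpow_pos_of_pos hn' r)] using hC ⟨n, rfl⟩
  rwa [rpow_neg hn'.le, ← div_eq_mul_inv, le_div_iff₀ (rpow_pos_of_pos hn' r)]

lemma tendsto_mul_rpow_zero_of_tendsto_mul_rpow {x : ℕ → ℝ} {r s L : ℝ} (hsr : s < r)
    (h : Tendsto (fun n : ℕ => x n * (n : ℝ) ^ r) atTop (𝓝 L)) :
    Tendsto (fun n : ℕ => x n * (n : ℝ) ^ s) atTop (𝓝 0) := by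
  have hpow : Tendsto (fun n : ℕ => (n : ℝ) ^ (-(r - s))) atTop (𝓝 0) :=
    (tendsto_rpow_neg_atTop (sub_pos.mpr hsr)).comp tendsto_natCast_atTop_atTop
  have hlim := h.mul hpow
  rw [mul_zero] at hlim
  refine hlim.congr' ?_
  filter_upwards [eventually_gt_atTop 0] with n hn
  rw [mul_assoc, ← rpow_add (Nat.cast_pos.mpr hn)]
  ring_nf

section Moments

variable {Ω : Type*} {m mΩ : MeasurableSpace Ω} {μ : Measure Ω} [IsFiniteMeasure μ]
  {X Y V : Ω → ℝ} {c : ℝ}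

lemma integral_eq_of_condExp_ae_eq (hm : m ≤ mΩ) (h : μ[Y|m] =ᵐ[μ] V) :
    ∫ ω, Y ω ∂μ = ∫ ω, V ω ∂μ :=
  (integral_condExp hm).symm.trans (integral_congr_ae h)

lemma integral_eq_of_condExp_sub_ae_eq (hm : m ≤ mΩ) (hX : Integrable X μ) (hY : Integrable Y μ)
    (h : μ[fun ω => Y ω - X ω|m] =ᵐ[μ] fun ω => c * X ω) :
    ∫ ω, Y ω ∂μ = (1 + c) * ∫ ω, X ω ∂μ := by
  have := integral_eq_of_condExp_ae_eq hm h
  rw [integral_sub hY hX, integral_const_mul] at this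
  linarith

lemma integral_mul_eq_integral_mul_condExp (hm : m ≤ mΩ) (hX : StronglyMeasurable[m] X)
    (hXY : Integrable (X * Y) μ) (hY : Integrable Y μ) :
    ∫ ω, X ω * Y ω ∂μ = ∫ ω, X ω * (μ[Y|m]) ω ∂μ :=
  (integral_condExp hm).symm.trans
    (integral_congr_ae (condExp_mul_of_stronglyMeasurable_left hX hXY hY))

lemma integral_sq_eq_of_condExp_sub_ae_eq (hm : m ≤ mΩ) (hXm : StronglyMeasurable[m] X)
    (hX : MemLp X 2 μ) (hY : MemLp Y 2 μ)
    (h : μ[fun ω => Y ω - X ω|m] =ᵐ[μ] fun ω => c * X ω) :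
    ∫ ω, Y ω ^ 2 ∂μ = (1 + 2 * c) * ∫ ω, X ω ^ 2 ∂μ + ∫ ω, (Y ω - X ω) ^ 2 ∂μ := by
  have hD : MemLp (fun ω => Y ω - X ω) 2 μ := hY.sub hX
  have hXD : Integrable (X * fun ω => Y ω - X ω) μ := hX.integrable_mul hD
  have hcross : ∫ ω, X ω * (Y ω - X ω) ∂μ = c * ∫ ω, X ω ^ 2 ∂μ := by
    rw [integral_mul_eq_integral_mul_condExp hm hXm hXD (hD.integrable one_le_two),
      ← integral_const_mul]
    exact integral_congr_ae (by filter_upwards [h] with ω hω; rw [hω]; ring)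
  calc ∫ ω, Y ω ^ 2 ∂μ
      = ∫ ω, (X ω ^ 2 + 2 * (X ω * (Y ω - X ω)) + (Y ω - X ω) ^ 2) ∂μ :=
        integral_congr_ae (ae_of_all _ fun ω => by ring)
    _ = ∫ ω, X ω ^ 2 ∂μ + 2 * ∫ ω, X ω * (Y ω - X ω) ∂μ + ∫ ω, (Y ω - X ω) ^ 2 ∂μ := by
        have hcross2 : Integrable (fun ω => 2 * (X ω * (Y ω - X ω))) μ := hXD.const_mul 2
        have hsum : Integrable (fun ω => X ω ^ 2 + 2 * (X ω * (Y ω - X ω))) μ :=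
          hX.integrable_sq.add hcross2
        rw [integral_add hsum hD.integrable_sq,
          integral_add hX.integrable_sq hcross2, integral_const_mul]
    _ = _ := by rw [hcross]; ring

end Moments

section StepReinforcement

variable {Ω : Type*} {mΩ : MeasurableSpace Ω} {μ : Measure Ω} [IsFiniteMeasure μ]
  {ℱ : Filtration ℕ mΩ} {Δ N : ℕ → Ω → ℝ} {p : ℝ} {n : ℕ}

lemma integral_succ_eq_of_condExp_increment (hn : n ≠ 0) (hΔn : Integrable (Δ n) μ)
    (hΔn' : Integrable (Δ (n + 1)) μ)
    (h : μ[fun ω => Δ (n + 1) ω - Δ n ω|ℱ n] =ᵐ[μ] fun ω => -p * Δ n ω / n) :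
    ∫ ω, Δ (n + 1) ω ∂μ = (n + -p) / n * ∫ ω, Δ n ω ∂μ := by
  have hn' : (n : ℝ) ≠ 0 := Nat.cast_ne_zero.mpr hn
  rw [integral_eq_of_condExp_sub_ae_eq (ℱ.le n) hΔn hΔn'
    (h.trans (.of_forall fun ω => by ring) : _ =ᵐ[μ] fun ω => (-p / n) * Δ n ω)]
  field_simp

lemma integral_succ_eq_of_condExp_mass
    (h : μ[N (n + 1)|ℱ n] =ᵐ[μ] fun ω => (((n : ℝ) + p) / n) * N n ω) :
    ∫ ω, N (n + 1) ω ∂μ = (n + p) / n * ∫ ω, N n ω ∂μ :=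
  (integral_eq_of_condExp_ae_eq (ℱ.le n) h).trans (integral_const_mul _ _)

lemma integral_sq_sub_div_three_succ (hn : n ≠ 0) (hΔm : StronglyMeasurable[ℱ n] (Δ n))
    (hΔn : MemLp (Δ n) 2 μ) (hΔn' : MemLp (Δ (n + 1)) 2 μ)
    (h1 : μ[fun ω => Δ (n + 1) ω - Δ n ω|ℱ n] =ᵐ[μ] fun ω => -p * Δ n ω / n)
    (h2 : μ[fun ω => (Δ (n + 1) ω - Δ n ω) ^ 2|ℱ n] =ᵐ[μ] fun ω => p * N n ω / n)
    (hN : μ[N (n + 1)|ℱ n] =ᵐ[μ] fun ω => (((n : ℝ) + p) / n) * N n ω) :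
    ∫ ω, Δ (n + 1) ω ^ 2 ∂μ - (∫ ω, N (n + 1) ω ∂μ) / 3
      = (n + -(2 * p)) / n * (∫ ω, Δ n ω ^ 2 ∂μ - (∫ ω, N n ω ∂μ) / 3) := by
  have hn' : (n : ℝ) ≠ 0 := Nat.cast_ne_zero.mpr hn
  rw [integral_sq_eq_of_condExp_sub_ae_eq (ℱ.le n) hΔm hΔn hΔn'
      (h1.trans (.of_forall fun ω => by ring) : _ =ᵐ[μ] fun ω => (-p / n) * Δ n ω),
    integral_eq_of_condExp_ae_eq (ℱ.le n) h2, integral_succ_eq_of_condExp_mass hN, integral_div,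
    integral_const_mul]
  field_simp
  ring

end StepReinforcement

theorem signed_occurrence_count_moments_general
    {Ω : Type*} {mΩ : MeasurableSpace Ω} {μ : Measure Ω} [IsProbabilityMeasure μ]
    (p : ℝ) (hp : p ∈ Set.Ioo (0 : ℝ) 1)
    (j : ℕ) (hj : 1 ≤ j)
    (ℱ : Filtration ℕ mΩ) (Δ N : ℕ → Ω → ℝ)
    (hadaptΔ : Adapted ℱ Δ)
    (hintΔ : ∀ n, Integrable (Δ n) μ)
    (hintΔ2 : ∀ n, Integrable (fun ω => (Δ n ω) ^ 2) μ)
    (hcond1 : ∀ n, j ≤ n →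
      μ[fun ω => Δ (n + 1) ω - Δ n ω|ℱ n] =ᵐ[μ] fun ω => -p * Δ n ω / n)
    (hcond2 : ∀ n, j ≤ n →
      μ[fun ω => (Δ (n + 1) ω - Δ n ω) ^ 2|ℱ n] =ᵐ[μ] fun ω => p * N n ω / n)
    (hcondN : ∀ n, j ≤ n →
      μ[N (n + 1)|ℱ n] =ᵐ[μ] fun ω => (((n : ℝ) + p) / n) * N n ω)
    (hinitΔ : ∫ ω, Δ j ω ∂μ = 1 - p)
    (hinitN : ∫ ω, N j ω ∂μ = 1 - p) :
    (∀ n, j ≤ n → ∫ ω, Δ n ω ∂μ =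
      (1 - p) * Real.Gamma j * Real.Gamma (n - p) / (Real.Gamma n * Real.Gamma (j - p))) ∧
    Tendsto (fun n : ℕ => (∫ ω, Δ n ω ∂μ) * (n : ℝ) ^ p) atTop
      (𝓝 ((1 - p) * Real.Gamma j / Real.Gamma (j - p))) ∧
    (∃ C : ℝ, ∀ n, j ≤ n →
      |(∫ ω, (Δ n ω) ^ 2 ∂μ) - (∫ ω, N n ω ∂μ) / 3| ≤ C * (n : ℝ) ^ (-(2 * p))) ∧
    Tendsto (fun n : ℕ => (∫ ω, (Δ n ω) ^ 2 ∂μ) / (n : ℝ) ^ p) atTop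
      (𝓝 ((1 - p) * Real.Gamma j / (3 * Real.Gamma (j + p)))) := by
  obtain ⟨hp0, hp1⟩ := hp
  have hj' : (1 : ℝ) ≤ j := Nat.one_le_cast.mpr hj
  have hL2 (n : ℕ) : MemLp (Δ n) 2 μ := (memLp_two_iff_integrable_sq
    ((hadaptΔ n).stronglyMeasurable.mono (ℱ.le n)).aestronglyMeasurable).mpr (hintΔ2 n)
  have hmean (n : ℕ) (hn : j ≤ n) :=
    integral_succ_eq_of_condExp_increment (by omega) (hintΔ n) (hintΔ (n + 1)) (hcond1 n hn)
  have hmass (n : ℕ) (hn : j ≤ n) := integral_succ_eq_of_condExp_mass (hcondN n hn)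
  have hgap (n : ℕ) (hn : j ≤ n) := integral_sq_sub_div_three_succ (by omega)
    (hadaptΔ n).stronglyMeasurable (hL2 n) (hL2 (n + 1)) (hcond1 n hn) (hcond2 n hn) (hcondN n hn)
  have hΔlim := tendsto_mul_rpow_neg_of_recurrence (x := fun n => ∫ ω, Δ n ω ∂μ) (a := -p) hj
    (by linarith) hmean
  have hNlim := tendsto_mul_rpow_neg_of_recurrence (x := fun n => ∫ ω, N n ω ∂μ) (a := p) hj
    (by positivity) hmass
  -- started at `j + 1`, where `n - 2 * p` is positive even if `j = 1`
  have hgaplim := tendsto_mul_rpow_neg_of_recurrence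
    (x := fun n => ∫ ω, Δ n ω ^ 2 ∂μ - (∫ ω, N n ω ∂μ) / 3) (a := -(2 * p)) (m := j + 1) (by omega)
    (by push_cast; linarith) fun n hn => hgap n (by omega)
  rw [neg_neg] at hgaplim
  refine ⟨fun n hn => ?_, ?_, ?_, ?_⟩
  · rw [eq_Gamma_div_of_recurrence (x := fun n => ∫ ω, Δ n ω ∂μ) hj (by linarith) hmean n hn,
      hinitΔ, ← sub_eq_add_neg, ← sub_eq_add_neg]
    ring
  · simpa only [neg_neg, hinitΔ, ← sub_eq_add_neg] using hΔlim
  · obtain ⟨C, hC⟩ := exists_abs_le_mul_rpow_neg_of_tendsto hgaplim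
    exact ⟨C, fun n hn => hC n (by omega)⟩
  · have hlim := (hNlim.div_const 3).add
      (tendsto_mul_rpow_zero_of_tendsto_mul_rpow (s := -p) (by linarith) hgaplim)
    rw [hinitN, add_zero] at hlim
    convert hlim using 2 with n
    · rw [div_eq_mul_inv, ← rpow_neg (Nat.cast_nonneg n)]
      ring
    · ring

/-- First and second moments of the signed occurrence count `Δ_j(n)` in the negatively
step-reinforced random walk: `E[Δ_j(n)] = (1-p)Γ(j)Γ(n-p)/(Γ(n)Γ(j-p)) ∼ (1-p)Γ(j)/Γ(j-p)·n^{-p}`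
and `E[Δ_j(n)²] = E[N_j(n)]/3 + O(n^{-2p}) ∼ (1-p)Γ(j)/(3Γ(j+p))·n^p`. -/
theorem signed_occurrence_count_moments
    {Ω : Type*} {mΩ : MeasurableSpace Ω} {μ : Measure Ω} [IsProbabilityMeasure μ]
    (p : ℝ) (hp : p ∈ Set.Ioo (0 : ℝ) 1)
    (j : ℕ) (hj : 1 ≤ j)
    (ℱ : Filtration ℕ mΩ) (Δ N : ℕ → Ω → ℝ)
    (hadaptΔ : Adapted ℱ Δ) (hadaptN : Adapted ℱ N)
    (hintΔ : ∀ n, Integrable (Δ n) μ)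
    (hintΔ2 : ∀ n, Integrable (fun ω => (Δ n ω) ^ 2) μ)
    (hintN : ∀ n, Integrable (N n) μ)
    (hcond1 : ∀ n, j ≤ n →
      μ[fun ω => Δ (n + 1) ω - Δ n ω|ℱ n] =ᵐ[μ] fun ω => -p * Δ n ω / n)
    (hcond2 : ∀ n, j ≤ n →
      μ[fun ω => (Δ (n + 1) ω - Δ n ω) ^ 2|ℱ n] =ᵐ[μ] fun ω => p * N n ω / n)
    (hcondN : ∀ n, j ≤ n →
      μ[N (n + 1)|ℱ n] =ᵐ[μ] fun ω => (((n : ℝ) + p) / n) * N n ω)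
    (hinitΔ : ∫ ω, Δ j ω ∂μ = 1 - p)
    (hinitΔ2 : ∫ ω, (Δ j ω) ^ 2 ∂μ = 1 - p)
    (hinitN : ∫ ω, N j ω ∂μ = 1 - p) :
    (∀ n, j ≤ n → ∫ ω, Δ n ω ∂μ =
      (1 - p) * Real.Gamma j * Real.Gamma (n - p) / (Real.Gamma n * Real.Gamma (j - p))) ∧
    Tendsto (fun n : ℕ => (∫ ω, Δ n ω ∂μ) * (n : ℝ) ^ p) atTop
      (𝓝 ((1 - p) * Real.Gamma j / Real.Gamma (j - p))) ∧
    (∃ C : ℝ, ∀ n, j ≤ n →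
      |(∫ ω, (Δ n ω) ^ 2 ∂μ) - (∫ ω, N n ω ∂μ) / 3| ≤ C * (n : ℝ) ^ (-(2 * p))) ∧
    Tendsto (fun n : ℕ => (∫ ω, (Δ n ω) ^ 2 ∂μ) / (n : ℝ) ^ p) atTop
      (𝓝 ((1 - p) * Real.Gamma j / (3 * Real.Gamma (j + p)))) :=
  signed_occurrence_count_moments_general p hp j hj ℱ Δ N hadaptΔ hintΔ hintΔ2 hcond1 hcond2 hcondN
    hinitΔ hinitN
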